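/- arXiv:0804.2704 — 2 statements merged into one kernel-verified Lean document; each statement's English description precedes it below -/
import Mathlib

section
/- The spectrum of the hierarchical Laplacean −Δ on ℝ^{Λ_K} consists exactly of the numbers λ_k = (L^{−2k} − L^{−2K})/(L² − 1) for k = 0,…,K; for 0 ≤ k ≤ K−1, λ_k is an eigenvalue of multiplicity rank Q_k = L^{d(K−k)} − L^{d(K−k−1)} = L^{d(K−k)}(1 − L^{−d}), and λ_K = 0 is a simple eigenvalue whose eigenspace is spanned by the constant vector. -/
open Matrix

noncomputable section

/-- A digit: an element of `{0,…,L−1}^d`. -/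
abbrev HierDigit (L d : ℕ) := Fin d → Fin L

/-- A site of `Λ_K`: a string `θ = (θ_1,…,θ_K)` of digits. -/
abbrev HierSite (L d K : ℕ) := Fin K → HierDigit L d

/-- The matrix of the `a`-fold block operator `B^a : ℝ^{Λ_{a+b}} → ℝ^{Λ_b}`:
`(B^a u)_τ = L^{−da/2} Σ_{η ∈ ({0,…,L−1}^d)^a} u_{(η,τ)}`.  For `a = 1` this is the
block operator `B` itself. -/
def hierB (L d : ℕ) (a b : ℕ) : Matrix (HierSite L d b) (HierSite L d (a + b)) ℝ :=
  fun τ θ =>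
    if (fun i : Fin b => θ (Fin.natAdd a i)) = τ then (Real.sqrt ((L : ℝ) ^ (d * a)))⁻¹ else 0

/-- The projection `P_k = (B*)^k B^k` on `ℝ^{Λ_K}` (for `k ≤ K`; junk value `0` otherwise). -/
def hierP (L d K : ℕ) (k : ℕ) : Matrix (HierSite L d K) (HierSite L d K) ℝ :=
  if h : k ≤ K then
    (Matrix.reindex
      (Equiv.arrowCongr (finCongr (Nat.add_sub_cancel' h)) (Equiv.refl (HierDigit L d)))
      (Equiv.arrowCongr (finCongr (Nat.add_sub_cancel' h)) (Equiv.refl (HierDigit L d))))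
      ((hierB L d k (K - k))ᵀ * hierB L d k (K - k))
  else 0

/-- The fluctuation operator `Q_k = P_k − P_{k+1}` for `0 ≤ k ≤ K−1` and `Q_K = P_K`
(the junk value `hierP L d K (K+1) = 0` makes the single formula correct for `k = K`). -/
def hierQ (L d K : ℕ) (k : ℕ) : Matrix (HierSite L d K) (HierSite L d K) ℝ :=
  hierP L d K k - hierP L d K (k + 1)

/-- The hierarchical Laplacean `−Δ = Σ_{k=1}^K L^{−2k}(I − P_k)`. -/
def hierLap (L d K : ℕ) : Matrix (HierSite L d K) (HierSite L d K) ℝ :=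
  ∑ k ∈ Finset.Icc 1 K, ((L : ℝ) ^ (2 * k))⁻¹ • ((1 : Matrix _ _ ℝ) - hierP L d K k)

/-- The eigenvalues `λ_k = (L^{−2k} − L^{−2K})/(L² − 1)` of the hierarchical Laplacean. -/
noncomputable def hierEig (L K : ℕ) (k : ℕ) : ℝ :=
  (((L : ℝ) ^ (2 * k))⁻¹ - ((L : ℝ) ^ (2 * K))⁻¹) / ((L : ℝ) ^ 2 - 1)

/-!
`P_k` averages over the blocks of sites sharing the digits `θ_{k+1}, …, θ_K`. These blocks are
nested, so `P_j P_k = P_{max j k}`, and the `Q_k = P_k − P_{k+1}` (`k ≤ K`) are orthogonal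
idempotents summing to `1`. Summation by parts turns `−Δ = Σ_k L^{−2k} (1 − P_k)` into
`Σ_k λ_k Q_k`; as the `λ_k` are distinct, the eigenspace of `λ_k` is the range of `Q_k`, whose
dimension is `tr Q_k = tr P_k − tr P_{k+1} = L^{d(K−k)} − L^{d(K−k−1)}`. For `k = K` the range of
`Q_K = P_K` contains the constants and has dimension `tr P_K = 1`.
-/

open Finset Module.End

namespace OrthogonalIdempotents

section Algebra

variable {R A ι : Type*} [CommSemiring R] [Semiring A] [Algebra R A] {e : ι → A}

lemma mul_sum_smul (he : OrthogonalIdempotents e) (c : ι → R) {s : Finset ι} {i : ι}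
    (hi : i ∈ s) : e i * ∑ j ∈ s, c j • e j = c i • e i := by
  classical
  simp [Finset.mul_sum, he.mul_eq, hi]

lemma sum_smul_mul (he : OrthogonalIdempotents e) (c : ι → R) {s : Finset ι} {i : ι}
    (hi : i ∈ s) : (∑ j ∈ s, c j • e j) * e i = c i • e i := by
  classical
  simp [Finset.sum_mul, he.mul_eq, hi]

end Algebra

section Eigen

variable {𝕜 V ι : Type*} [Field 𝕜] [AddCommGroup V] [Module 𝕜 V] {e : ι → Module.End 𝕜 V}
  {s : Finset ι} {c : ι → 𝕜}

lemma apply_eq_zero_of_apply_sum_smul_eq (he : OrthogonalIdempotents e) {v : V} {μ : 𝕜}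
    (hv : (∑ j ∈ s, c j • e j) v = μ • v) {i : ι} (hi : i ∈ s) (hμ : μ ≠ c i) : e i v = 0 := by
  have h := congr(e i $hv)
  rw [← Module.End.mul_apply, he.mul_sum_smul c hi, map_smul, LinearMap.smul_apply] at h
  have h' : (c i - μ) • e i v = 0 := by rw [sub_smul, h, sub_self]
  exact (smul_eq_zero.mp h').resolve_left (sub_ne_zero.mpr hμ.symm)

lemma eigenspace_sum_smul (he : OrthogonalIdempotents e) (hs : ∑ j ∈ s, e j = 1)
    (hc : Set.InjOn c s) {i : ι} (hi : i ∈ s) :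
    eigenspace (∑ j ∈ s, c j • e j) (c i) = LinearMap.range (e i) := by
  ext v
  rw [mem_eigenspace_iff]
  constructor
  · intro hv
    refine ⟨v, ?_⟩
    calc e i v = ∑ j ∈ s, e j v := (sum_eq_single_of_mem i hi fun j hj hji =>
            he.apply_eq_zero_of_apply_sum_smul_eq hv hj fun h => hji (hc hj hi h.symm)).symm
      _ = v := by rw [← LinearMap.sum_apply, hs, Module.End.one_apply]
  · rintro ⟨w, rfl⟩
    rw [← Module.End.mul_apply, he.sum_smul_mul c hi, LinearMap.smul_apply]

lemma hasEigenvalue_sum_smul_iff (he : OrthogonalIdempotents e) (hs : ∑ j ∈ s, e j = 1)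
    {μ : 𝕜} : HasEigenvalue (∑ j ∈ s, c j • e j) μ ↔ ∃ i ∈ s, e i ≠ 0 ∧ μ = c i := by
  constructor
  · intro h
    obtain ⟨v, hv, hv0⟩ := h.exists_hasEigenvector
    by_contra! hμ
    refine hv0 ?_
    rw [show v = (∑ j ∈ s, e j) v by rw [hs]; rfl, LinearMap.sum_apply]
    refine sum_eq_zero fun i hi => ?_
    by_cases hei : e i = 0
    · rw [hei, LinearMap.zero_apply]
    · exact he.apply_eq_zero_of_apply_sum_smul_eq (mem_eigenspace_iff.mp hv) hi (hμ i hi hei)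
  · rintro ⟨i, hi, hei, rfl⟩
    obtain ⟨w, hw⟩ : ∃ w, e i w ≠ 0 := by
      by_contra! h
      exact hei (LinearMap.ext h)
    refine hasEigenvalue_of_hasEigenvector ⟨mem_eigenspace_iff.mpr ?_, hw⟩
    rw [← Module.End.mul_apply, he.sum_smul_mul c hi, LinearMap.smul_apply]

end Eigen

end OrthogonalIdempotents

lemma orthogonalIdempotents_sub_succ {R : Type*} [Ring R] {P : ℕ → R}
    (hP : ∀ a b, P a * P b = P (max a b)) : OrthogonalIdempotents fun i => P i - P (i + 1) := by
  refine ⟨fun i => ?_, fun i j hij => ?_⟩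
  · simp [IsIdempotentElem, sub_mul, mul_sub, hP]
  · simp only [sub_mul, mul_sub, hP]
    rcases lt_or_gt_of_ne hij with h | h
    · rw [max_eq_right h.le, max_eq_right (by omega : i ≤ j + 1),
        max_eq_right (by omega : i + 1 ≤ j), max_eq_right (by omega : i + 1 ≤ j + 1)]
      abel
    · rw [max_eq_left h.le, max_eq_left (by omega : j + 1 ≤ i),
        max_eq_left (by omega : j ≤ i + 1), max_eq_left (by omega : j + 1 ≤ i + 1)]
      abel

lemma Matrix.cast_rank_eq_trace_of_isIdempotentElem {n 𝕜 : Type*} [Fintype n] [DecidableEq n]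
    [Field 𝕜] {A : Matrix n n 𝕜} (hA : IsIdempotentElem A) : (A.rank : 𝕜) = A.trace := by
  rw [Matrix.rank, ← Matrix.toLin'_apply', ← Matrix.trace_toLin'_eq]
  exact (LinearMap.IsIdempotentElem.isProj_range _ (hA.map Matrix.toLinAlgEquiv')).trace.symm

lemma Finset.sum_Icc_smul_sub_eq {R M : Type*} [Semiring R] [AddCommGroup M] [Module R M]
    (a : ℕ → R) (P : ℕ → M) (n : ℕ) :
    ∑ k ∈ Icc 1 n, a k • (P 0 - P k) =
      ∑ j ∈ range (n + 1), (∑ k ∈ Ioc j n, a k) • (P j - P (j + 1)) := by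
  simp only [← sum_range_sub', smul_sum, sum_smul]
  exact sum_comm' fun k j => by simp only [mem_Icc, mem_range, mem_Ioc]; omega

lemma Finset.sum_Ioc_inv_pow {F : Type*} [Field F] {q : F} (hq : q ≠ 1) (hq0 : q ≠ 0) {j n : ℕ}
    (hjn : j ≤ n) :
    ∑ k ∈ Ioc j n, (q ^ k)⁻¹ = ((q ^ j)⁻¹ - (q ^ n)⁻¹) / (q - 1) := by
  induction n, hjn using Nat.le_induction with
  | base => simp
  | succ n hjn ih =>
    have : q - 1 ≠ 0 := sub_ne_zero.mpr hq
    rw [sum_Ioc_succ_top hjn, ih]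
    field_simp
    ring

section FiberAverage

variable {α β γ : Type*} [DecidableEq β] [DecidableEq γ]

/-- When every fibre of `f` has `c` elements, this is the orthogonal projection onto the functions
constant on the fibres of `f`. -/
def fiberAverage (f : α → β) (c : ℕ) : Matrix α α ℝ :=
  Matrix.of fun x y => if f x = f y then (c : ℝ)⁻¹ else 0

lemma fiberAverage_transpose (f : α → β) (c : ℕ) : (fiberAverage f c)ᵀ = fiberAverage f c := by
  ext x y
  simp only [fiberAverage, Matrix.transpose_apply, Matrix.of_apply, eq_comm]

lemma Matrix.transpose_mul_self_ite_apply_eq [Fintype β] (f : α → β) (w : ℝ) :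
    (Matrix.of fun b a => if f a = b then w else 0)ᵀ *
        Matrix.of (fun b a => if f a = b then w else 0) =
      Matrix.of fun x y => if f x = f y then w * w else 0 := by
  ext x y
  simp [Matrix.mul_apply, ite_mul, eq_comm]

variable [Fintype α] {f : α → β} {c : ℕ}

lemma cast_ne_zero_of_card_fiber {x : α} (hc : #{y | f y = f x} = c) : (c : ℝ) ≠ 0 := by
  rw [← hc, Nat.cast_ne_zero]
  exact card_ne_zero_of_mem (mem_filter.mpr ⟨mem_univ x, rfl⟩)

lemma fiberAverage_mul_of_factors {g : α → γ} (c' : ℕ) (hfg : ∀ x y, f x = f y → g x = g y)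
    (hc : ∀ x, #{y | f y = f x} = c) :
    fiberAverage f c * fiberAverage g c' = fiberAverage g c' := by
  ext x y
  have hterm : ∀ z, (if f x = f z then (c : ℝ)⁻¹ else 0) * (if g z = g y then (c' : ℝ)⁻¹ else 0)
      = if f z = f x then (c : ℝ)⁻¹ * (if g x = g y then (c' : ℝ)⁻¹ else 0) else 0 := by
    intro z
    by_cases h : f z = f x
    · rw [if_pos h.symm, if_pos h, hfg z x h]
    · rw [if_neg (Ne.symm h), if_neg h, zero_mul]
  simp only [fiberAverage, Matrix.mul_apply, Matrix.of_apply, hterm, sum_ite, sum_const_zero,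
    add_zero, sum_const, nsmul_eq_mul, hc x, ← mul_assoc,
    mul_inv_cancel₀ (cast_ne_zero_of_card_fiber (hc x)), one_mul]

lemma fiberAverage_mulVec_one (hc : ∀ x, #{y | f y = f x} = c) :
    fiberAverage f c *ᵥ 1 = 1 := by
  ext x
  simp only [Matrix.mulVec, dotProduct, fiberAverage, Matrix.of_apply, Pi.one_apply, mul_one,
    eq_comm (a := f x), sum_ite, sum_const_zero, add_zero, sum_const, nsmul_eq_mul, hc x,
    mul_inv_cancel₀ (cast_ne_zero_of_card_fiber (hc x))]

lemma trace_fiberAverage (f : α → β) (c : ℕ) :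
    (fiberAverage f c).trace = Fintype.card α / c := by
  simp [Matrix.trace, fiberAverage, div_eq_mul_inv]

end FiberAverage

/-- `θ ↦ (θ_{k+1}, …, θ_K)` in the paper's `1`-based indexing. -/
def hierTail (L d K k : ℕ) (θ : HierSite L d K) : HierSite L d (K - k) :=
  fun i => θ ⟨k + i, by omega⟩

variable {L d K : ℕ}

lemma hierTail_eq_iff {k : ℕ} {θ θ' : HierSite L d K} :
    hierTail L d K k θ = hierTail L d K k θ' ↔ ∀ i : Fin K, k ≤ i → θ i = θ' i := by
  refine ⟨fun h i hi => ?_, fun h => funext fun i => h _ (Nat.le_add_right k i)⟩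
  simpa [hierTail, Nat.add_sub_cancel' hi] using congrFun h ⟨i - k, by omega⟩

lemma card_hierTail_fiber {k : ℕ} (hk : k ≤ K) (θ : HierSite L d K) :
    #{θ' | hierTail L d K k θ' = hierTail L d K k θ} = L ^ (d * k) := by
  have hfiber : ({θ' | hierTail L d K k θ' = hierTail L d K k θ} : Finset (HierSite L d K)) =
      Fintype.piFinset fun i : Fin K => if k ≤ (i : ℕ) then {θ i} else univ := by
    ext θ'
    simp only [hierTail_eq_iff, mem_filter, mem_univ, true_and, Fintype.mem_piFinset]
    refine forall_congr' fun i => ?_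
    split_ifs <;> simp [*]
  rw [hfiber, Fintype.card_piFinset]
  calc ∏ i : Fin K, #(if k ≤ (i : ℕ) then {θ i} else univ)
      = ∏ i : Fin K, if k ≤ (i : ℕ) then 1 else L ^ d := by
        congr! 1 with i; split_ifs <;> simp
    _ = ∏ i ∈ range K, if k ≤ i then 1 else L ^ d :=
        Fin.prod_univ_eq_prod_range (fun i => if k ≤ i then 1 else L ^ d) K
    _ = ∏ i ∈ range k, L ^ d := by
        rw [prod_ite, prod_const_one, one_mul]
        congr 1
        ext i
        simp only [mem_filter, mem_range]
        omega
    _ = L ^ (d * k) := by rw [prod_const, card_range, pow_mul]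

lemma hierP_eq_fiberAverage {k : ℕ} (hk : k ≤ K) :
    hierP L d K k = fiberAverage (hierTail L d K k) (L ^ (d * k)) := by
  ext θ θ'
  rw [hierP, dif_pos hk, Matrix.reindex_apply, Matrix.submatrix_apply]
  erw [Matrix.transpose_mul_self_ite_apply_eq]
  simp only [fiberAverage, Matrix.of_apply]
  rw [← mul_inv, Real.mul_self_sqrt (by positivity), Nat.cast_pow]
  rfl

lemma hierP_of_lt {k : ℕ} (hk : K < k) : hierP L d K k = 0 := dif_neg hk.not_ge

lemma hierP_transpose (k : ℕ) : (hierP L d K k)ᵀ = hierP L d K k := by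
  rcases le_or_gt k K with hk | hk
  · rw [hierP_eq_fiberAverage hk, fiberAverage_transpose]
  · rw [hierP_of_lt hk, Matrix.transpose_zero]

lemma hierP_mul_of_le {a b : ℕ} (hab : a ≤ b) : hierP L d K a * hierP L d K b = hierP L d K b := by
  rcases le_or_gt b K with hb | hb
  · rw [hierP_eq_fiberAverage (hab.trans hb), hierP_eq_fiberAverage hb]
    refine fiberAverage_mul_of_factors _ (fun θ θ' h => ?_) (card_hierTail_fiber (hab.trans hb))
    rw [hierTail_eq_iff] at h ⊢
    exact fun i hi => h i (hab.trans hi)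
  · rw [hierP_of_lt hb, Matrix.mul_zero]

lemma hierP_mul_hierP (a b : ℕ) : hierP L d K a * hierP L d K b = hierP L d K (max a b) := by
  rcases le_total a b with hab | hba
  · rw [max_eq_right hab, hierP_mul_of_le hab]
  · rw [max_eq_left hba]
    calc hierP L d K a * hierP L d K b = (hierP L d K b * hierP L d K a)ᵀ := by
          rw [Matrix.transpose_mul, hierP_transpose, hierP_transpose]
      _ = hierP L d K a := by rw [hierP_mul_of_le hba, hierP_transpose]

lemma hierP_zero : hierP L d K 0 = 1 := by
  have htail : ∀ θ θ' : HierSite L d K, hierTail L d K 0 θ = hierTail L d K 0 θ' ↔ θ = θ' :=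
    fun θ θ' => by rw [hierTail_eq_iff, funext_iff]; simp
  ext θ θ'
  simp [hierP_eq_fiberAverage (Nat.zero_le K), fiberAverage, Matrix.one_apply, htail]

lemma orthogonalIdempotents_hierQ : OrthogonalIdempotents (hierQ L d K) :=
  orthogonalIdempotents_sub_succ hierP_mul_hierP

lemma sum_hierQ : ∑ j ∈ range (K + 1), hierQ L d K j = 1 := by
  unfold hierQ
  rw [sum_range_sub', hierP_zero, hierP_of_lt K.lt_succ_self, sub_zero]

lemma cast_rank_hierQ (k : ℕ) : ((hierQ L d K k).rank : ℝ) = (hierQ L d K k).trace :=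
  Matrix.cast_rank_eq_trace_of_isIdempotentElem (orthogonalIdempotents_hierQ.idem k)

lemma trace_hierP (hL : 0 < L) {k : ℕ} (hk : k ≤ K) :
    (hierP L d K k).trace = (L : ℝ) ^ (d * (K - k)) := by
  rw [hierP_eq_fiberAverage hk, trace_fiberAverage, div_eq_iff (by positivity)]
  simp only [Fintype.card_fun, Fintype.card_fin, Nat.cast_pow, ← pow_mul, ← pow_add, ← mul_add,
    Nat.sub_add_cancel hk]

lemma trace_hierQ_of_lt (hL : 0 < L) {k : ℕ} (hk : k < K) :
    (hierQ L d K k).trace = (L : ℝ) ^ (d * (K - k)) - (L : ℝ) ^ (d * (K - k - 1)) := by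
  rw [hierQ, Matrix.trace_sub, trace_hierP hL hk.le, trace_hierP hL hk, Nat.sub_sub]

lemma trace_hierQ_self (hL : 0 < L) : (hierQ L d K K).trace = 1 := by
  rw [hierQ, hierP_of_lt K.lt_succ_self, sub_zero, trace_hierP hL le_rfl, Nat.sub_self,
    mul_zero, pow_zero]

lemma trace_hierQ_pos (hL : 2 ≤ L) (hd : 1 ≤ d) {k : ℕ} (hk : k ≤ K) :
    0 < (hierQ L d K k).trace := by
  rcases hk.lt_or_eq with hk | rfl
  · rw [trace_hierQ_of_lt (by omega) hk, sub_pos]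
    exact pow_lt_pow_right₀ (by exact_mod_cast hL)
      (Nat.mul_lt_mul_left (by omega) |>.mpr (by omega))
  · rw [trace_hierQ_self (by omega)]
    exact one_pos

lemma rank_hierQ_of_lt (hL : 0 < L) {k : ℕ} (hk : k < K) :
    (hierQ L d K k).rank = L ^ (d * (K - k)) - L ^ (d * (K - k - 1)) := by
  have h := cast_rank_hierQ (L := L) (d := d) (K := K) k
  rw [trace_hierQ_of_lt hL hk, ← Nat.cast_pow, ← Nat.cast_pow,
    ← Nat.cast_sub (Nat.pow_le_pow_right hL (Nat.mul_le_mul_left d (Nat.sub_le _ 1)))] at h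
  exact_mod_cast h

lemma hierEig_self : hierEig L K K = 0 := by
  rw [hierEig, sub_self, zero_div]

lemma hierEig_injective (hL : 2 ≤ L) : Function.Injective (hierEig L K) := by
  intro a b h
  have hL1 : (1 : ℝ) < L := by exact_mod_cast hL
  have hden : (L : ℝ) ^ 2 - 1 ≠ 0 := by nlinarith
  rw [hierEig, hierEig, div_left_inj' hden, sub_left_inj, _root_.inv_inj] at h
  have := pow_right_injective₀ (by positivity) hL1.ne' h
  omega

lemma hierEig_eq_sum (hL : 2 ≤ L) {j : ℕ} (hj : j ≤ K) :
    hierEig L K j = ∑ k ∈ Ioc j K, ((L : ℝ) ^ (2 * k))⁻¹ := by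
  have hL1 : (1 : ℝ) < L := by exact_mod_cast hL
  simp only [hierEig, pow_mul]
  rw [sum_Ioc_inv_pow (by nlinarith) (by positivity) hj]

lemma hierLap_eq_sum_smul_hierQ (hL : 2 ≤ L) :
    hierLap L d K = ∑ j ∈ range (K + 1), hierEig L K j • hierQ L d K j := by
  rw [hierLap, ← hierP_zero, sum_Icc_smul_sub_eq]
  refine sum_congr rfl fun j hj => ?_
  rw [hierEig_eq_sum hL (Nat.lt_succ_iff.mp (mem_range.mp hj)), hierQ]

lemma orthogonalIdempotents_hierQ_mulVecLin :
    OrthogonalIdempotents fun j => (hierQ L d K j).mulVecLin :=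
  orthogonalIdempotents_hierQ.map Matrix.toLinAlgEquiv'.toRingHom

lemma sum_hierQ_mulVecLin : ∑ j ∈ range (K + 1), (hierQ L d K j).mulVecLin = 1 := by
  simp only [← Matrix.toLin'_apply', ← map_sum, sum_hierQ, Matrix.toLin'_one]
  rfl

lemma hierLap_mulVecLin (hL : 2 ≤ L) :
    (hierLap L d K).mulVecLin = ∑ j ∈ range (K + 1), hierEig L K j • (hierQ L d K j).mulVecLin := by
  simp only [hierLap_eq_sum_smul_hierQ hL, ← Matrix.toLin'_apply', map_sum, map_smul]

lemma eigenspace_hierLap (hL : 2 ≤ L) {k : ℕ} (hk : k ≤ K) :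
    Module.End.eigenspace (hierLap L d K).mulVecLin (hierEig L K k) =
      LinearMap.range (hierQ L d K k).mulVecLin := by
  rw [hierLap_mulVecLin hL]
  exact orthogonalIdempotents_hierQ_mulVecLin.eigenspace_sum_smul sum_hierQ_mulVecLin
    (hierEig_injective hL).injOn (mem_range.mpr (Nat.lt_succ_of_le hk))

lemma hasEigenvalue_hierLap_iff (hL : 2 ≤ L) (hd : 1 ≤ d) {μ : ℝ} :
    Module.End.HasEigenvalue (hierLap L d K).mulVecLin μ ↔ ∃ k ≤ K, μ = hierEig L K k := by
  have hQ : ∀ k ≤ K, (hierQ L d K k).mulVecLin ≠ 0 := fun k hk h => by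
    have := trace_hierQ_pos (L := L) hL hd hk
    rw [← Matrix.toLin'_apply', LinearEquiv.map_eq_zero_iff] at h
    rw [h, Matrix.trace_zero] at this
    exact this.false
  rw [hierLap_mulVecLin hL,
    orthogonalIdempotents_hierQ_mulVecLin.hasEigenvalue_sum_smul_iff sum_hierQ_mulVecLin]
  simp only [mem_range, Nat.lt_succ_iff]
  exact ⟨fun ⟨k, hk, _, hμ⟩ => ⟨k, hk, hμ⟩, fun ⟨k, hk, hμ⟩ => ⟨k, hk, hQ k hk, hμ⟩⟩

lemma finrank_range_hierQ_self (hL : 0 < L) :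
    Module.finrank ℝ (LinearMap.range (hierQ L d K K).mulVecLin) = 1 := by
  have h := cast_rank_hierQ (L := L) (d := d) (K := K) K
  rw [trace_hierQ_self hL] at h
  exact_mod_cast h

lemma range_hierQ_self (hL : 0 < L) :
    LinearMap.range (hierQ L d K K).mulVecLin = Submodule.span ℝ {fun _ => (1 : ℝ)} := by
  have hQ : hierQ L d K K = hierP L d K K := by
    rw [hierQ, hierP_of_lt K.lt_succ_self, sub_zero]
  refine (Submodule.eq_of_le_of_finrank_eq ?_ ?_).symm
  · rw [Submodule.span_le, Set.singleton_subset_iff]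
    exact ⟨1, by rw [Matrix.mulVecLin_apply, hQ, hierP_eq_fiberAverage le_rfl,
      fiberAverage_mulVec_one (card_hierTail_fiber le_rfl)]; rfl⟩
  · have hθ : HierSite L d K := fun _ _ => ⟨0, hL⟩
    rw [finrank_span_singleton (Function.ne_iff.mpr ⟨hθ, one_ne_zero⟩),
      finrank_range_hierQ_self hL]

theorem hierarchical_laplacean_spectrum_general
    (L d K : ℕ) (hL : 2 ≤ L) (hd : 1 ≤ d) :
    (∀ μ : ℝ, Module.End.HasEigenvalue (hierLap L d K).mulVecLin μ ↔
        ∃ k : ℕ, k ≤ K ∧ μ = hierEig L K k) ∧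
    (∀ k : ℕ, k < K →
        Module.finrank ℝ (Module.End.eigenspace (hierLap L d K).mulVecLin (hierEig L K k)) =
            L ^ (d * (K - k)) - L ^ (d * (K - k - 1)) ∧
          (hierQ L d K k).rank = L ^ (d * (K - k)) - L ^ (d * (K - k - 1)) ∧
          (L ^ (d * (K - k)) - L ^ (d * (K - k - 1)) : ℝ) =
            (L : ℝ) ^ (d * (K - k)) * (1 - ((L : ℝ) ^ d)⁻¹)) ∧
    hierEig L K K = 0 ∧
    Module.finrank ℝ (Module.End.eigenspace (hierLap L d K).mulVecLin 0) = 1 ∧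
    Module.End.eigenspace (hierLap L d K).mulVecLin 0 =
      Submodule.span ℝ {fun _ : HierSite L d K => (1 : ℝ)} := by
  have hL0 : 0 < L := by omega
  have hker : Module.End.eigenspace (hierLap L d K).mulVecLin 0 =
      LinearMap.range (hierQ L d K K).mulVecLin := by
    simpa only [hierEig_self] using eigenspace_hierLap (d := d) hL le_rfl
  refine ⟨fun μ => hasEigenvalue_hierLap_iff hL hd, fun k hk => ⟨?_, rank_hierQ_of_lt hL0 hk, ?_⟩,
    hierEig_self, ?_, ?_⟩
  · rw [eigenspace_hierLap hL hk.le]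
    exact rank_hierQ_of_lt hL0 hk
  · obtain ⟨m, hm⟩ : ∃ m, K - k = m + 1 := ⟨K - k - 1, by omega⟩
    have : (L : ℝ) ^ d ≠ 0 := by positivity
    rw [hm, Nat.add_sub_cancel, mul_add, mul_one, pow_add]
    field_simp
  · rw [hker, finrank_range_hierQ_self hL0]
  · rw [hker, range_hierQ_self hL0]

/-- The spectrum of the hierarchical Laplacean `−Δ` on `ℝ^{Λ_K}` consists
exactly of the numbers `λ_k = (L^{−2k} − L^{−2K})/(L² − 1)`, `k = 0,…,K`; for `k ≤ K−1` the
eigenvalue `λ_k` has multiplicity `rank Q_k = L^{d(K−k)} − L^{d(K−k−1)} = L^{d(K−k)}(1 − L^{−d})`,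
and `λ_K = 0` is a simple eigenvalue whose eigenspace is spanned by the constant vector. -/
theorem hierarchical_laplacean_spectrum
    (L d K : ℕ) (hL : 2 ≤ L) (hd : 1 ≤ d) (hK : 1 ≤ K) :
    (∀ μ : ℝ, Module.End.HasEigenvalue (hierLap L d K).mulVecLin μ ↔
        ∃ k : ℕ, k ≤ K ∧ μ = hierEig L K k) ∧
    (∀ k : ℕ, k < K →
        Module.finrank ℝ (Module.End.eigenspace (hierLap L d K).mulVecLin (hierEig L K k)) =
            L ^ (d * (K - k)) - L ^ (d * (K - k - 1)) ∧
          (hierQ L d K k).rank = L ^ (d * (K - k)) - L ^ (d * (K - k - 1)) ∧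
          (L ^ (d * (K - k)) - L ^ (d * (K - k - 1)) : ℝ) =
            (L : ℝ) ^ (d * (K - k)) * (1 - ((L : ℝ) ^ d)⁻¹)) ∧
    hierEig L K K = 0 ∧
    Module.finrank ℝ (Module.End.eigenspace (hierLap L d K).mulVecLin 0) = 1 ∧
    Module.End.eigenspace (hierLap L d K).mulVecLin 0 =
      Submodule.span ℝ {fun _ : HierSite L d K => (1 : ℝ)} :=
  hierarchical_laplacean_spectrum_general L d K hL hd

end
end

section
/- Fix an integer d ≥ 1, reals C > 0 and μ < 0, and let K = K(L) be any integer-valued function of real L > 1 with K(L) ln L → C as L ↓ 1. Then lim_{L↓1} (1 − L^{−d}) Σ_{k=0}^{K(L)} L^{−dk} [ (L−1)(L^{−2k} − L^{−2K(L)})/(L² − 1) − μ ]^{−1} = d ∫_0^C 2 e^{−dy} / ( e^{−2y} − e^{−2C} − 2μ ) dy = ∫_0^{(1−e^{−2C})/2} (λ − μ)^{−1} ρ'(λ) dλ, where ρ'(λ) = 2^{d/2} (d/2) ( λ + e^{−2C}/2 )^{d/2 − 1}. -/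
/-!
With `t = log L`, the weight `(1 - L^{-d}) L^{-dk} = e^{-dkt} - e^{-d(k+1)t}` is the integral
of `d e^{-dy}` over `[kt, (k+1)t)`, and `(L - 1) λ_k = (e^{-2kt} - e^{-2Kt}) / (L + 1)`. So the
trace is the integral of a step function of `y`, evaluated at the grid point `⌊y/t⌋ t ≤ y`.
As `L ↓ 1` it converges off `y = C` to `d e^{-dy} · 2 / (e^{-2y} - e^{-2C} - 2μ)` on `[0, C)`
and to `0` beyond `C`, and it is bounded by `d / (-μ)` on a fixed interval, so dominated
convergence gives the limit. The second identity is the substitution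
`λ = (e^{-2y} - e^{-2C}) / 2`, under which `ρ'(λ) dλ = -d e^{-dy} dy`.
-/

open Filter Topology MeasureTheory Set Real

namespace HierarchicalResolvent

lemma inv_pow_eq_exp_neg {L : ℝ} (hL : 0 < L) (n : ℕ) : (L ^ n)⁻¹ = exp (-(n * log L)) := by
  rw [← rpow_natCast, rpow_def_of_pos hL, exp_neg, mul_comm]

lemma tendsto_log_nhdsGT_one : Tendsto log (𝓝[>] 1) (𝓝[>] 0) := by
  refine tendsto_nhdsWithin_iff.2 ⟨?_, eventually_nhdsWithin_of_forall fun L hL => log_pos hL⟩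
  simpa using (continuousAt_log one_ne_zero).tendsto.mono_left nhdsWithin_le_nhds

lemma tendsto_natFloor_div_mul {y : ℝ} (hy : 0 ≤ y) :
    Tendsto (fun t : ℝ => (⌊y / t⌋₊ : ℝ) * t) (𝓝[>] 0) (𝓝 y) :=
  ((tendsto_nat_floor_mul_div_atTop hy).comp tendsto_inv_nhdsGT_zero).congr fun t => by
    simp [div_eq_mul_inv]

lemma integral_mul_exp_neg_mul (c a b : ℝ) :
    ∫ y in a..b, c * exp (-c * y) = exp (-c * a) - exp (-c * b) := by
  have hderiv (y : ℝ) : HasDerivAt (fun y => -exp (-c * y)) (c * exp (-c * y)) y :=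
    ((hasDerivAt_id y).const_mul (-c)).exp.neg.congr_deriv (by simp [mul_comm])
  rw [intervalIntegral.integral_eq_sub_of_hasDerivAt (fun y _ => hderiv y)
    ((by fun_prop : Continuous fun y => c * exp (-c * y)).intervalIntegrable a b)]
  ring

lemma integral_mul_natFloor_div {f : ℝ → ℝ} (hf : Continuous f) {t : ℝ} (ht : 0 < t)
    (r : ℕ → ℝ) (n : ℕ) :
    ∫ y in (0 : ℝ)..n * t, f y * r ⌊y / t⌋₊ =
      ∑ k ∈ Finset.range n, (∫ y in k * t..(k + 1) * t, f y) * r k := by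
  have cell (k : ℕ) : EqOn (fun y => f y * r k) (fun y => f y * r ⌊y / t⌋₊)
      (uIoo (k * t) (((k + 1 : ℕ) : ℝ) * t)) := by
    intro y hy
    rw [uIoo_of_le (by gcongr; simp), Nat.cast_succ] at hy
    dsimp only
    rw [Nat.floor_eq_on_Ico k (y / t) ⟨(le_div_iff₀ ht).2 hy.1.le, (div_lt_iff₀ ht).2 hy.2⟩]
  have hsum := intervalIntegral.sum_integral_adjacent_intervals (μ := volume)
    (f := fun y => f y * r ⌊y / t⌋₊) (a := fun k : ℕ => (k : ℝ) * t) (n := n) fun k _ =>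
      ((hf.mul continuous_const : Continuous fun y => f y * r k).intervalIntegrable _ _).congr_uIoo
        (cell k)
  simp only [Nat.cast_zero, zero_mul] at hsum
  rw [← hsum]
  refine Finset.sum_congr rfl fun k _ => ?_
  rw [← Nat.cast_succ, ← intervalIntegral.integral_congr_uIoo (cell k),
    intervalIntegral.integral_mul_const]

lemma weighted_sum_eq_integral (d : ℕ) {L : ℝ} (hL : 1 < L) (r : ℕ → ℝ) (n : ℕ) :
    (1 - (L ^ d)⁻¹) * ∑ k ∈ Finset.range n, (L ^ (d * k))⁻¹ * r k =
      ∫ y in (0 : ℝ)..n * log L, d * exp (-d * y) * r ⌊y / log L⌋₊ := by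
  rw [integral_mul_natFloor_div (by fun_prop) (log_pos hL), Finset.mul_sum]
  refine Finset.sum_congr rfl fun k _ => ?_
  rw [integral_mul_exp_neg_mul, inv_pow_eq_exp_neg (by linarith),
    inv_pow_eq_exp_neg (by linarith), ← mul_assoc, sub_mul, one_mul, ← exp_add]
  push_cast
  ring_nf

lemma tendsto_succ_mul_log {K : ℝ → ℕ} {C : ℝ}
    (hK : Tendsto (fun L => (K L : ℝ) * log L) (𝓝[>] 1) (𝓝 C)) :
    Tendsto (fun L => ((K L : ℝ) + 1) * log L) (𝓝[>] 1) (𝓝 C) := by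
  simpa [add_mul] using hK.add (tendsto_nhds_of_tendsto_nhdsWithin tendsto_log_nhdsGT_one)

noncomputable def resolventTerm (μ L : ℝ) (m k : ℕ) : ℝ :=
  ((exp (-2 * (k * log L)) - exp (-2 * (m * log L))) / (L + 1) - μ)⁻¹

lemma resolventTerm_eq (μ : ℝ) {L : ℝ} (hL : 1 < L) (m k : ℕ) :
    ((L - 1) * ((L ^ (2 * k))⁻¹ - (L ^ (2 * m))⁻¹) / (L ^ 2 - 1) - μ)⁻¹ =
      resolventTerm μ L m k := by
  rw [resolventTerm, inv_pow_eq_exp_neg (by linarith), inv_pow_eq_exp_neg (by linarith),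
    show L ^ 2 - 1 = (L - 1) * (L + 1) by ring, mul_div_mul_left _ _ (by linarith)]
  push_cast
  ring_nf

lemma resolventTerm_mem_Icc {μ : ℝ} (hμ : μ < 0) {L : ℝ} (hL : 1 ≤ L) {m k : ℕ}
    (hkm : k ≤ m) :
    resolventTerm μ L m k ∈ Icc 0 (-μ)⁻¹ := by
  have hexp : exp (-2 * (m * log L)) ≤ exp (-2 * (k * log L)) :=
    exp_le_exp.2 (by nlinarith [log_nonneg hL, (Nat.cast_le (α := ℝ)).2 hkm])
  have hgap : 0 ≤ (exp (-2 * (k * log L)) - exp (-2 * (m * log L))) / (L + 1) :=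
    div_nonneg (sub_nonneg.2 hexp) (by linarith)
  exact ⟨inv_nonneg.2 (by linarith), inv_anti₀ (by linarith) (by linarith)⟩

lemma tendsto_resolventTerm {μ : ℝ} (hμ : μ < 0) {m k : ℝ → ℕ} {s c : ℝ} (hsc : s ≤ c)
    (hk : Tendsto (fun L => (k L : ℝ) * log L) (𝓝[>] 1) (𝓝 s))
    (hm : Tendsto (fun L => (m L : ℝ) * log L) (𝓝[>] 1) (𝓝 c)) :
    Tendsto (fun L => resolventTerm μ L (m L) (k L)) (𝓝[>] 1)
      (𝓝 (2 / (exp (-2 * s) - exp (-2 * c) - 2 * μ))) := by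
  have hexp : exp (-2 * c) ≤ exp (-2 * s) := exp_le_exp.2 (by linarith)
  have hL : Tendsto (fun L : ℝ => L + 1) (𝓝[>] 1) (𝓝 2) :=
    ((continuous_add_const 1).tendsto' 1 2 one_add_one_eq_two).mono_left nhdsWithin_le_nhds
  have h := ((((hk.const_mul (-2)).rexp.sub (hm.const_mul (-2)).rexp).div hL
    two_ne_zero).sub_const μ).inv₀ (by linarith)
  rwa [show (exp (-2 * s) - exp (-2 * c)) / 2 - μ = (exp (-2 * s) - exp (-2 * c) - 2 * μ) / 2 by
    ring, inv_div] at h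

section StepIntegrand

variable (d : ℕ) (μ : ℝ) (K : ℝ → ℕ)

noncomputable def stepIntegrand (L : ℝ) : ℝ → ℝ :=
  indicator (Ico 0 ((K L + 1) * log L)) fun y =>
    d * exp (-d * y) * resolventTerm μ L (K L) ⌊y / log L⌋₊

lemma trace_eq_integral_stepIntegrand {L : ℝ} (hL : 1 < L) :
    (1 - (L ^ d)⁻¹) * ∑ k ∈ Finset.range (K L + 1),
        (L ^ (d * k))⁻¹ * ((L - 1) * ((L ^ (2 * k))⁻¹ - (L ^ (2 * K L))⁻¹) / (L ^ 2 - 1) - μ)⁻¹ =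
      ∫ y, stepIntegrand d μ K L y := by
  simp_rw [resolventTerm_eq μ hL]
  rw [weighted_sum_eq_integral d hL, stepIntegrand, integral_indicator measurableSet_Ico,
    integral_Ico_eq_integral_Ioo, ← integral_Ioc_eq_integral_Ioo,
    ← intervalIntegral.integral_of_le (by positivity [log_pos hL]), Nat.cast_succ]

lemma measurable_stepIntegrand (L : ℝ) : Measurable (stepIntegrand d μ K L) := by
  refine Measurable.indicator ?_ measurableSet_Ico
  exact (by fun_prop : Measurable fun y : ℝ => (d : ℝ) * exp (-d * y)).mul
    ((measurable_from_nat (f := resolventTerm μ L (K L))).comp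
      (measurable_id.div_const _).nat_floor)

variable {d μ K}

lemma norm_stepIntegrand_le (hμ : μ < 0) {L b : ℝ} (hL : 1 < L)
    (hb : (K L + 1) * log L ≤ b) (y : ℝ) :
    ‖stepIntegrand d μ K L y‖ ≤ indicator (Ico 0 b) (fun _ => d * (-μ)⁻¹) y := by
  by_cases hy : y ∈ Ico 0 ((K L + 1) * log L)
  · have hfloor : ⌊y / log L⌋₊ ≤ K L := Nat.lt_succ_iff.1 <| (Nat.floor_lt (by
      positivity [hy.1, log_pos hL])).2 <| by
        rw [div_lt_iff₀ (log_pos hL)]; exact_mod_cast hy.2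
    obtain ⟨hres0, hres⟩ := resolventTerm_mem_Icc hμ hL.le hfloor
    have hexp : exp (-d * y) ≤ 1 :=
      exp_le_one_iff.2 (by nlinarith [hy.1, d.cast_nonneg (α := ℝ)])
    rw [stepIntegrand, indicator_of_mem hy,
      indicator_of_mem (show y ∈ Ico 0 b from ⟨hy.1, hy.2.trans_le hb⟩),
      norm_of_nonneg (by positivity)]
    calc (d : ℝ) * exp (-d * y) * resolventTerm μ L (K L) ⌊y / log L⌋₊
        ≤ d * 1 * (-μ)⁻¹ := by gcongr
      _ = d * (-μ)⁻¹ := by ring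
  · rw [stepIntegrand, indicator_of_notMem hy, norm_zero]
    exact indicator_nonneg (fun _ _ => mul_nonneg d.cast_nonneg (inv_nonneg.2 (by linarith))) y

lemma tendsto_stepIntegrand (hμ : μ < 0) {C : ℝ}
    (hK : Tendsto (fun L => (K L : ℝ) * log L) (𝓝[>] 1) (𝓝 C)) {y : ℝ} (hyC : y ≠ C) :
    Tendsto (fun L => stepIntegrand d μ K L y) (𝓝[>] 1)
      (𝓝 (indicator (Ico 0 C)
        (fun y => d * exp (-d * y) * (2 / (exp (-2 * y) - exp (-2 * C) - 2 * μ))) y)) := by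
  have hK1 := tendsto_succ_mul_log hK
  rcases lt_or_ge y 0 with hy0 | hy0
  · simp [stepIntegrand, indicator_of_notMem, hy0.not_ge]
  rcases hyC.lt_or_gt with hyC | hyC
  · rw [indicator_of_mem (show y ∈ Ico 0 C from ⟨hy0, hyC⟩)]
    have hfloor := (tendsto_natFloor_div_mul hy0).comp tendsto_log_nhdsGT_one
    refine ((tendsto_resolventTerm hμ hyC.le hfloor hK).const_mul _).congr' ?_
    filter_upwards [hK1.eventually_const_lt hyC] with L hL
    rw [stepIntegrand, indicator_of_mem (show y ∈ Ico 0 _ from ⟨hy0, hL⟩)]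
  · rw [indicator_of_notMem fun h => h.2.not_gt hyC]
    refine tendsto_const_nhds.congr' ?_
    filter_upwards [hK1.eventually_lt_const hyC] with L hL
    rw [stepIntegrand, indicator_of_notMem fun h => h.2.not_gt hL]

lemma tendsto_integral_stepIntegrand {C : ℝ} (hC : 0 < C) (hμ : μ < 0)
    (hK : Tendsto (fun L => (K L : ℝ) * log L) (𝓝[>] 1) (𝓝 C)) :
    Tendsto (fun L => ∫ y, stepIntegrand d μ K L y) (𝓝[>] 1)
      (𝓝 ((d : ℝ) * ∫ y in (0 : ℝ)..C,
        2 / (exp (-2 * y) - exp (-2 * C) - 2 * μ) * exp (-(d : ℝ) * y))) := by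
  have hlim := tendsto_integral_filter_of_dominated_convergence (μ := volume)
    (indicator (Ico 0 (C + 1)) fun _ => d * (-μ)⁻¹)
    (Eventually.of_forall fun L => (measurable_stepIntegrand d μ K L).aestronglyMeasurable)
    (by
      filter_upwards [self_mem_nhdsWithin,
        (tendsto_succ_mul_log hK).eventually_le_const (lt_add_one C)] with L hL hb
      exact ae_of_all _ (norm_stepIntegrand_le hμ hL hb))
    ((integrable_indicator_iff measurableSet_Ico).2 (integrableOn_const measure_Ico_lt_top.ne))
    (by filter_upwards [volume.ae_ne C] with y hy using tendsto_stepIntegrand hμ hK hy)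
  convert hlim using 2
  rw [integral_indicator measurableSet_Ico, integral_Ico_eq_integral_Ioo,
    ← integral_Ioc_eq_integral_Ioo, ← intervalIntegral.integral_of_le hC.le,
    ← intervalIntegral.integral_const_mul]
  exact intervalIntegral.integral_congr fun y _ => by ring

end StepIntegrand

lemma spectralDensity_exp_mul_exp (d : ℕ) (y : ℝ) :
    (2 : ℝ) ^ ((d : ℝ) / 2) * ((d : ℝ) / 2) * (exp (-2 * y) / 2) ^ ((d : ℝ) / 2 - 1) *
      exp (-2 * y) = d * exp (-(d : ℝ) * y) := by
  have h2 : (0 : ℝ) < 2 ^ ((d : ℝ) / 2) := by positivity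
  rw [div_rpow (exp_pos _).le zero_le_two, ← exp_mul, rpow_sub two_pos, rpow_one]
  field_simp
  rw [mul_assoc, ← exp_add]
  ring_nf

lemma integral_resolvent_exp_eq_integral_spectralDensity (d : ℕ) {C μ : ℝ} (hC : 0 < C)
    (hμ : μ < 0) :
    (d : ℝ) * (∫ y in (0 : ℝ)..C,
        2 / (exp (-2 * y) - exp (-2 * C) - 2 * μ) * exp (-(d : ℝ) * y)) =
      ∫ lam in (0 : ℝ)..((1 - exp (-2 * C)) / 2),
        (lam - μ)⁻¹ * ((2 : ℝ) ^ ((d : ℝ) / 2) * ((d : ℝ) / 2) *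
          (lam + exp (-2 * C) / 2) ^ ((d : ℝ) / 2 - 1)) := by
  set E := exp (-2 * C)
  set ρ : ℝ → ℝ := fun lam => (lam - μ)⁻¹ * ((2 : ℝ) ^ ((d : ℝ) / 2) * ((d : ℝ) / 2) *
    (lam + E / 2) ^ ((d : ℝ) / 2 - 1))
  set f : ℝ → ℝ := fun y => (exp (-2 * y) - E) / 2
  have hf (y : ℝ) : HasDerivAt f (-exp (-2 * y)) y := by
    have := (((hasDerivAt_id y).const_mul (-2)).exp.sub_const E).div_const 2
    exact this.congr_deriv (by simp; ring)
  have himage : f '' uIcc 0 C ⊆ Ici 0 := by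
    rintro _ ⟨y, hy, rfl⟩
    rw [uIcc_of_le hC.le] at hy
    have : E ≤ exp (-2 * y) := exp_le_exp.2 (by linarith [hy.2])
    simp only [f, mem_Ici]
    linarith
  have hρ : ContinuousOn ρ (Ici 0) := by
    refine ((continuousOn_id.sub continuousOn_const).inv₀ fun x hx => ?_).mul
      (continuousOn_const.mul ((continuousOn_id.add continuousOn_const).rpow_const
        fun x hx => Or.inl ?_))
    · exact (show 0 < x - μ by linarith [mem_Ici.1 hx]).ne'
    · exact (show 0 < x + E / 2 by positivity [mem_Ici.1 hx]).ne'
  have hsubst := intervalIntegral.integral_comp_mul_deriv' (fun y _ => hf y)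
    (by fun_prop : Continuous fun y => -exp (-2 * y)).continuousOn (hρ.mono himage)
  have hintegrand (y : ℝ) : (ρ ∘ f) y * -exp (-2 * y) =
      -(d * (2 / (exp (-2 * y) - E - 2 * μ) * exp (-(d : ℝ) * y))) := by
    simp only [Function.comp, ρ, f]
    rw [show (exp (-2 * y) - E) / 2 + E / 2 = exp (-2 * y) / 2 by ring,
      show (exp (-2 * y) - E) / 2 - μ = (exp (-2 * y) - E - 2 * μ) / 2 by ring, inv_div]
    linear_combination (-2 / (exp (-2 * y) - E - 2 * μ)) * spectralDensity_exp_mul_exp d y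
  simp only [hintegrand, intervalIntegral.integral_neg, intervalIntegral.integral_const_mul]
    at hsubst
  rw [show f 0 = (1 - E) / 2 by simp [f], show f C = 0 by simp [f, E],
    intervalIntegral.integral_symm 0] at hsubst
  exact neg_injective hsubst

end HierarchicalResolvent

theorem continuum_hierarchical_resolvent_trace_general
    (d : ℕ) (C : ℝ) (hC : 0 < C) (μ : ℝ) (hμ : μ < 0)
    (K : ℝ → ℕ)
    (hK : Tendsto (fun L : ℝ => (K L : ℝ) * Real.log L) (𝓝[>] (1 : ℝ)) (𝓝 C)) :
    Tendsto
        (fun L : ℝ =>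
          (1 - (L ^ d)⁻¹) *
            ∑ k ∈ Finset.range (K L + 1),
              (L ^ (d * k))⁻¹ *
                ((L - 1) * ((L ^ (2 * k))⁻¹ - (L ^ (2 * K L))⁻¹) / (L ^ 2 - 1) - μ)⁻¹)
        (𝓝[>] (1 : ℝ))
        (𝓝 ((d : ℝ) *
          ∫ y in (0 : ℝ)..C,
            2 / (Real.exp (-2 * y) - Real.exp (-2 * C) - 2 * μ) * Real.exp (-(d : ℝ) * y))) ∧
      (d : ℝ) *
          (∫ y in (0 : ℝ)..C,
            2 / (Real.exp (-2 * y) - Real.exp (-2 * C) - 2 * μ) * Real.exp (-(d : ℝ) * y)) =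
        ∫ lam in (0 : ℝ)..((1 - Real.exp (-2 * C)) / 2),
          (lam - μ)⁻¹ *
            ((2 : ℝ) ^ ((d : ℝ) / 2) * ((d : ℝ) / 2) *
              (lam + Real.exp (-2 * C) / 2) ^ ((d : ℝ) / 2 - 1)) := by
  refine ⟨?_, HierarchicalResolvent.integral_resolvent_exp_eq_integral_spectralDensity d hC hμ⟩
  refine (HierarchicalResolvent.tendsto_integral_stepIntegrand hC hμ hK).congr' ?_
  filter_upwards [self_mem_nhdsWithin] with L hL
  exact (HierarchicalResolvent.trace_eq_integral_stepIntegrand d μ K hL).symm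

/-- Continuum (`L ↓ 1`) limit of the resolvent trace of the hierarchical
Laplacean.  Fix `d ≥ 1`, `C > 0`, `μ < 0` and an integer-valued function `K(L)` of the real
parameter `L > 1` with `K(L) ln L → C` as `L ↓ 1`.  Then
`lim_{L↓1} (1 − L^{−d}) Σ_{k=0}^{K(L)} L^{−dk} [(L−1)(L^{−2k} − L^{−2K(L)})/(L²−1) − μ]⁻¹
 = d ∫_0^C 2 e^{−dy}/(e^{−2y} − e^{−2C} − 2μ) dy
 = ∫_0^{(1−e^{−2C})/2} (λ − μ)⁻¹ ρ'(λ) dλ`, with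
`ρ'(λ) = 2^{d/2}(d/2)(λ + e^{−2C}/2)^{d/2−1}`. -/
theorem continuum_hierarchical_resolvent_trace
    (d : ℕ) (hd : 1 ≤ d) (C : ℝ) (hC : 0 < C) (μ : ℝ) (hμ : μ < 0)
    (K : ℝ → ℕ)
    (hK : Tendsto (fun L : ℝ => (K L : ℝ) * Real.log L) (𝓝[>] (1 : ℝ)) (𝓝 C)) :
    Tendsto
        (fun L : ℝ =>
          (1 - (L ^ d)⁻¹) *
            ∑ k ∈ Finset.range (K L + 1),
              (L ^ (d * k))⁻¹ *
                ((L - 1) * ((L ^ (2 * k))⁻¹ - (L ^ (2 * K L))⁻¹) / (L ^ 2 - 1) - μ)⁻¹)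
        (𝓝[>] (1 : ℝ))
        (𝓝 ((d : ℝ) *
          ∫ y in (0 : ℝ)..C,
            2 / (Real.exp (-2 * y) - Real.exp (-2 * C) - 2 * μ) * Real.exp (-(d : ℝ) * y))) ∧
      (d : ℝ) *
          (∫ y in (0 : ℝ)..C,
            2 / (Real.exp (-2 * y) - Real.exp (-2 * C) - 2 * μ) * Real.exp (-(d : ℝ) * y)) =
        ∫ lam in (0 : ℝ)..((1 - Real.exp (-2 * C)) / 2),
          (lam - μ)⁻¹ *
            ((2 : ℝ) ^ ((d : ℝ) / 2) * ((d : ℝ) / 2) *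
              (lam + Real.exp (-2 * C) / 2) ^ ((d : ℝ) / 2 - 1)) :=
  continuum_hierarchical_resolvent_trace_general d C hC μ hμ K hK
end
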